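/- Let K be a field, A and B commutative K-algebras, C a cocommutative K-coalgebra, ψ : C → Hom_K(A,B) a cocommutative coalgebra measuring, M an A-module, N a B-module, D a C-comodule, and φ : D → Hom_K(M,N) a C-comodule measuring from M to N relative to ψ. Then for each t ∈ D, the K-linear maps L^φ(t)[k] : M ⊗ A^{⊗k} → N ⊗ B^{⊗k}, m ⊗ a₁ ⊗ … ⊗ a_k ↦ Σ φ(t₍₀₎)(m) ⊗ ψ(t₍₁₎)(a₁) ⊗ … ⊗ ψ(t₍ₖ₎)(a_k) (sum over the iterated coaction/comultiplication of t), assemble into a natural transformation L^φ(t) : L(A,M) → L(B,N) of Γ-modules, i.e., of functors from the category Γ of finite pointed sets to Vect_K. -/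

import Mathlib

/-!
Common infrastructure: the skeletal category `Γ` of finite pointed sets, coalgebra
measurings, comodule measurings, iterated comultiplications/coactions, the Sweedler-type
chain-level maps of a measuring, the Loday `Γ`-module data, and higher order Hochschild
homology of a `Γ`-module with respect to a pointed simplicial set (via left Kan extension
along `Γ → Sets_⋆`, followed by the Moore (alternating face map) complex and homology).
-/

open CategoryTheory TensorProduct PiTensorProduct

/-- A morphism of the skeletal category `Γ` of finite pointed sets, from
`[k] = {0,…,k}` to `[l] = {0,…,l}` (based at `0`). -/
@[ext] structure GammaHom (k l : ℕ) : Type where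
  toFun : Fin (k + 1) → Fin (l + 1)
  map_zero : toFun 0 = 0

/-- The identity of `[k]` in `Γ`. -/
def GammaHom.id (k : ℕ) : GammaHom k k := ⟨_root_.id, rfl⟩

/-- Composition in `Γ`. -/
def GammaHom.comp {k l p : ℕ} (g : GammaHom l p) (f : GammaHom k l) : GammaHom k p :=
  ⟨g.toFun ∘ f.toFun, by simp [Function.comp, f.map_zero, g.map_zero]⟩

/-- The skeletal category `Γ` of finite pointed sets `[k] = {0,1,…,k}` based at `0`. -/
structure GammaCat : Type where
  len : ℕ

instance : Category GammaCat where
  Hom a b := GammaHom a.len b.len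
  id a := GammaHom.id a.len
  comp f g := g.comp f
  id_comp _ := rfl
  comp_id _ := rfl
  assoc _ _ _ := rfl

/-- The inclusion `Γ → Sets_⋆` of `Γ` into the category of pointed sets. -/
def gammaToPointed : GammaCat ⥤ Pointed.{0} where
  obj a := ⟨Fin (a.len + 1), 0⟩
  map f := ⟨f.toFun, f.map_zero⟩
  map_id _ := rfl
  map_comp _ _ := rfl

/-- The fiber `f⁻¹(0) ∖ {0}` of `f : [k] → [l]` over the basepoint, with
`{1,…,k}` identified with `Fin k` via `i ↦ i.succ`. -/
def fiber0 {k l : ℕ} (f : GammaHom k l) : Finset (Fin k) :=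
  Finset.univ.filter fun i => f.toFun i.succ = 0

/-- The fiber `f⁻¹(j)` of `f : [k] → [l]` over `j ∈ {1,…,l}`, with
`{1,…,k}` identified with `Fin k` via `i ↦ i.succ`. -/
def fiber {k l : ℕ} (f : GammaHom k l) (j : Fin l) : Finset (Fin k) :=
  Finset.univ.filter fun i => f.toFun i.succ = j.succ

section Measuring

variable (K A B C : Type) [Field K]
variable [Ring A] [Algebra K A] [Ring B] [Algebra K B]
variable [AddCommGroup C] [Module K C] [Coalgebra K C]

/-- `ψ : C →ₗ[K] Hom_K(A,B)` is a coalgebra measuring from `A` to `B`: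
`ψ s (a * a') = Σ ψ s₍₁₎ a * ψ s₍₂₎ a'` (Sweedler sum over `Δ s = Σ s₍₁₎ ⊗ s₍₂₎`)
and `ψ s 1 = ε s • 1`. -/
structure IsMeasuring (ψ : C →ₗ[K] A →ₗ[K] B) : Prop where
  measures_mul : ∀ (s : C) (a a' : A),
    ψ s (a * a') =
      TensorProduct.lift ((LinearMap.mul K B).compl₁₂ (ψ.flip a) (ψ.flip a'))
        (Coalgebra.comul s)
  measures_one : ∀ s : C, ψ s 1 = Coalgebra.counit (R := K) s • (1 : B)

/-- The coalgebra `C` is cocommutative. -/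
def IsCocommutative : Prop :=
  (TensorProduct.comm K C C).toLinearMap ∘ₗ Coalgebra.comul =
    (Coalgebra.comul : C →ₗ[K] C ⊗[K] C)

end Measuring

section Comodule

variable (K C D : Type) [Field K]
variable [AddCommGroup C] [Module K C] [Coalgebra K C]
variable [AddCommGroup D] [Module K D]

/-- A (left) `C`-comodule structure `δ : D → C ⊗ D` on `D`, coassociative and counital. -/
structure CoactionStruct where
  δ : D →ₗ[K] C ⊗[K] D
  coassoc : (TensorProduct.assoc K C C D).toLinearMap ∘ₗ
      (Coalgebra.comul (R := K) (A := C)).rTensor D ∘ₗ δ = δ.lTensor C ∘ₗ δ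
  rTensor_counit_comp_coaction :
    (Coalgebra.counit (R := K) (A := C)).rTensor D ∘ₗ δ = TensorProduct.mk K K D 1

/-- Any coalgebra is a comodule over itself via its comultiplication. -/
def selfCoaction : CoactionStruct K C C where
  δ := Coalgebra.comul
  coassoc := Coalgebra.coassoc
  rTensor_counit_comp_coaction := Coalgebra.rTensor_counit_comp_comul

/-- Nested tensor powers `C ⊗ (C ⊗ (⋯ ⊗ (C ⊗ D)))` with `k` factors of `C`. -/
noncomputable def TD : ℕ → ModuleCat.{0} K
  | 0 => ModuleCat.of K D
  | (k+1) => ModuleCat.of K (C ⊗[K] TD k)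

/-- Iterated comultiplication of the first tensor factor,
`Δ^{(k)} ⊗ id : C ⊗ D → C^{⊗(k+1)} ⊗ D`, where `Δ^{(0)} = id` and
`Δ^{(j)} = (Δ ⊗ id^{⊗(j-1)}) ∘ Δ^{(j-1)}`. -/
noncomputable def comulIterTail : (k : ℕ) → (C ⊗[K] D) →ₗ[K] TD K C D (k+1)
  | 0 => LinearMap.id
  | (k+1) =>
      (((TensorProduct.assoc K C C (TD K C D k)).toLinearMap ∘ₗ
        (Coalgebra.comul (R := K) (A := C)).rTensor (TD K C D k)) ∘ₗ
        comulIterTail k)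

/-- The iterated coaction `D → C^{⊗k} ⊗ D` giving the iterated Sweedler coefficients
`t₍₁₎ ⊗ ⋯ ⊗ t₍ₖ₎ ⊗ t₍₀₎` of `t ∈ D`: the coaction `δ` followed by the `(k-1)`-fold
iterated comultiplication on the `C`-factor. -/
noncomputable def coactIter (ρ : CoactionStruct K C D) : (k : ℕ) → D →ₗ[K] TD K C D k
  | 0 => LinearMap.id
  | (k+1) => comulIterTail K C D k ∘ₗ ρ.δ

/-- The iterated comultiplication `Δ^{(k-1)} : C → C^{⊗k}` (with `Δ^{(0)} = id`,
`Δ^{(j)} = (Δ ⊗ id^{⊗(j-1)}) ∘ Δ^{(j-1)}`), giving the iterated Sweedler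
coefficients `s₍₁₎ ⊗ ⋯ ⊗ s₍ₖ₎` of `s ∈ C`. -/
noncomputable def comulIter : (k : ℕ) → C →ₗ[K] TD K C C k
  | 0 => LinearMap.id
  | (k+1) => comulIterTail K C C k ∘ₗ Coalgebra.comul

end Comodule

section ComodMeasuring

variable (K A B C D M N : Type) [Field K]
variable [Ring A] [Algebra K A] [Ring B] [Algebra K B]
variable [AddCommGroup C] [Module K C] [Coalgebra K C]
variable [AddCommGroup D] [Module K D]
variable [AddCommGroup M] [Module K M] [Module A M] [IsScalarTower K A M] [SMulCommClass K A M]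
variable [AddCommGroup N] [Module K N] [Module B N] [IsScalarTower K B N] [SMulCommClass K B N]

/-- The scalar action of `B` on the `B`-module `N`, as a `K`-bilinear map. -/
def lsmulKB : B →ₗ[K] N →ₗ[K] N :=
  LinearMap.mk₂ K (fun b n => b • n) (fun b b' n => add_smul b b' n)
    (fun c b n => smul_assoc c b n) (fun b n n' => smul_add b n n')
    (fun c b n => (smul_comm c b n).symm)

/-- `φ : D →ₗ[K] Hom_K(M,N)` is a `C`-comodule measuring from the `A`-module `M` to the
`B`-module `N`, relative to the measuring `ψ` and the coaction `ρ` on `D`: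
`φ t (a • m) = Σ ψ t₍₀₎ a • φ t₍₁₎ m` (Sweedler sum over `δ t = Σ t₍₀₎ ⊗ t₍₁₎`). -/
structure IsComodMeasuring (ψ : C →ₗ[K] A →ₗ[K] B) (ρ : CoactionStruct K C D)
    (φ : D →ₗ[K] M →ₗ[K] N) : Prop where
  measures : ∀ (t : D) (a : A) (m : M),
    φ t (a • m) =
      TensorProduct.lift ((lsmulKB K B N).compl₁₂ (ψ.flip a) (φ.flip m)) (ρ.δ t)

variable (ψ : C →ₗ[K] A →ₗ[K] B) (φ : D →ₗ[K] M →ₗ[K] N)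

/-- `c₁ ⊗ (c₂ ⊗ (⋯ ⊗ cₖ₊₁)) ↦ ψ c₁ a₁ * (ψ c₂ a₂ * (⋯ * ψ cₖ₊₁ aₖ₊₁))` : the ordered
product of the values of a measuring on the iterated Sweedler coefficients. -/
noncomputable def prodPair : (k : ℕ) → (Fin (k+1) → A) → (TD K C C k →ₗ[K] B)
  | 0, a => ψ.flip (a 0)
  | (k+1), a => TensorProduct.lift
      ((LinearMap.mul K B).compl₁₂ (ψ.flip (a 0)) (prodPair k (a ∘ Fin.succ)))

/-- `c₁ ⊗ (⋯ ⊗ (cₖ ⊗ d)) ↦ ψ c₁ a₁ • (ψ c₂ a₂ • (⋯ • φ d m))`. -/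
noncomputable def modPair : (k : ℕ) → (Fin k → A) → M → (TD K C D k →ₗ[K] N)
  | 0, _, m => φ.flip m
  | (k+1), a, m => TensorProduct.lift
      ((lsmulKB K B N).compl₁₂ (ψ.flip (a 0)) (modPair k (a ∘ Fin.succ) m))

/-- Prepending a factor to a tensor power of `B`, as a `K`-bilinear map. -/
noncomputable def tprodCons (k : ℕ) :
    B →ₗ[K] (⨂[K] (_ : Fin k), B) →ₗ[K] (⨂[K] (_ : Fin (k+1)), B) :=
  (PiTensorProduct.lift).toLinearMap ∘ₗ
    (PiTensorProduct.tprod K (s := fun _ : Fin (k+1) => B)).curryLeft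

/-- `c₁ ⊗ (⋯ ⊗ (cₖ ⊗ d)) ↦ φ d m ⊗ ψ c₁ a₁ ⊗ ⋯ ⊗ ψ cₖ aₖ` : applied to the iterated
coaction of `t`, this produces the Sweedler-type chain-level expression
`Σ φ t₍₀₎ m ⊗ ψ t₍₁₎ a₁ ⊗ ⋯ ⊗ ψ t₍ₖ₎ aₖ` of a comodule measuring. -/
noncomputable def measurePair : (k : ℕ) → M → (Fin k → A) →
    (TD K C D k →ₗ[K] N ⊗[K] (⨂[K] (_ : Fin k), B))
  | 0, m, _ =>
      (TensorProduct.mk K N (⨂[K] (_ : Fin 0), B)).flip (tprod K (fun _ : Fin 0 => (1:B)))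
        ∘ₗ (φ.flip m)
  | (k+1), m, a => TensorProduct.lift <|
      ((LinearMap.llcomp K (TD K C D k) (N ⊗[K] (⨂[K] (_ : Fin k), B))
          (N ⊗[K] (⨂[K] (_ : Fin (k+1)), B))).flip (measurePair k m (a ∘ Fin.succ))) ∘ₗ
        ((TensorProduct.mapBilinear (RingHom.id K) N (⨂[K] (_ : Fin k), B) N (⨂[K] (_ : Fin (k+1)), B)
            LinearMap.id) ∘ₗ (tprodCons K B k) ∘ₗ (ψ.flip (a 0)))

end ComodMeasuring

section Loday

variable (K A M : Type) [Field K] [CommRing A] [Algebra K A]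
variable [AddCommGroup M] [Module K M] [Module A M] [IsScalarTower K A M] [SMulCommClass K A M]

/-- The `k`-th term `M ⊗ A^{⊗k}` of the Loday `Γ`-module `L(A,M)`. -/
abbrev Lob (k : ℕ) : Type := M ⊗[K] (⨂[K] (_ : Fin k), A)

/-- The value of the Loday map `L(A,M)(f)` on the pure tensor `m ⊗ a₁ ⊗ ⋯ ⊗ aₖ`, namely
`(m • ∏_{i ∈ f⁻¹(0), i ≠ 0} aᵢ) ⊗ (∏_{i ∈ f⁻¹(1)} aᵢ) ⊗ ⋯ ⊗ (∏_{i ∈ f⁻¹(l)} aᵢ)`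
(empty products are `1`). -/
noncomputable def lodayElt {k l : ℕ} (f : GammaHom k l) (m : M) (a : Fin k → A) :
    Lob K A M l :=
  ((∏ i ∈ fiber0 f, a i) • m) ⊗ₜ[K] tprod K (fun j => ∏ i ∈ fiber f j, a i)

/-- The Loday `Γ`-module `L(A,M) : Γ ⥤ Vect_K`, assembled from a family of linear maps
satisfying the functoriality equations. -/
noncomputable def lodayFunctorOf
    (F : ∀ k l : ℕ, GammaHom k l → (Lob K A M k →ₗ[K] Lob K A M l))
    (hFid : ∀ k, F k k (GammaHom.id k) = LinearMap.id)
    (hFcomp : ∀ (k l p : ℕ) (f : GammaHom k l) (g : GammaHom l p),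
      F k p (g.comp f) = (F l p g) ∘ₗ (F k l f)) :
    GammaCat ⥤ ModuleCat.{0} K where
  obj a := ModuleCat.of K (Lob K A M a.len)
  map {a b} f := ModuleCat.ofHom (F a.len b.len f)
  map_id a := ModuleCat.hom_ext (hFid a.len)
  map_comp {a b c} f g := ModuleCat.hom_ext (hFcomp a.len b.len c.len f g)

end Loday

section HH

variable (K : Type) [Field K]

/-- The simplicial vector space `R̃(Y_•)` associated to a `Γ`-module `R` and a pointed
simplicial set `Y`, where `R̃ : Sets_⋆ ⥤ Vect_K` is the left Kan extension of `R` along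
the inclusion `Γ → Sets_⋆`. -/
noncomputable def simplicialExt (L : GammaCat ⥤ ModuleCat.{0} K)
    (Y : SimplexCategoryᵒᵖ ⥤ Pointed.{0}) : SimplicialObject (ModuleCat.{0} K) :=
  Y ⋙ (gammaToPointed.lan).obj L

/-- The homology `H_n(R̃(Y_•))` of the simplicial vector space `R̃(Y_•)` (computed via the
Moore / alternating face map complex).  For `R = L(A,M)` this is the higher order
Hochschild homology `HH_n^Y(A,M)` of order `Y`. -/
noncomputable def hh (L : GammaCat ⥤ ModuleCat.{0} K)
    (Y : SimplexCategoryᵒᵖ ⥤ Pointed.{0}) (n : ℕ) : ModuleCat.{0} K :=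
  ((AlgebraicTopology.alternatingFaceMapComplex (ModuleCat.{0} K)).obj
    (simplicialExt K L Y)).homology n

/-- The map induced on `H_n(R̃(Y_•))` by a morphism of `Γ`-modules `η : R ⟶ R'`. -/
noncomputable def hhMapOfNat {L L' : GammaCat ⥤ ModuleCat.{0} K} (η : L ⟶ L')
    (Y : SimplexCategoryᵒᵖ ⥤ Pointed.{0}) (n : ℕ) : hh K L Y n ⟶ hh K L' Y n :=
  HomologicalComplex.homologyMap
    ((AlgebraicTopology.alternatingFaceMapComplex (ModuleCat.{0} K)).map
      (CategoryTheory.Functor.whiskerLeft Y ((gammaToPointed.lan).map η))) n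

/-- The map induced on `H_n(R̃(Y_•))` by a map of pointed simplicial sets `g : Y ⟶ Z`. -/
noncomputable def hhMapOfSimplicial (L : GammaCat ⥤ ModuleCat.{0} K)
    {Y Z : SimplexCategoryᵒᵖ ⥤ Pointed.{0}} (g : Y ⟶ Z) (n : ℕ) :
    hh K L Y n ⟶ hh K L Z n :=
  HomologicalComplex.homologyMap
    ((AlgebraicTopology.alternatingFaceMapComplex (ModuleCat.{0} K)).map
      (CategoryTheory.Functor.whiskerRight g ((gammaToPointed.lan).obj L))) n

end HH

/-!
On `m ⊗ a₁ ⊗ ⋯ ⊗ aₖ` the map `L^φ(t)[k]` is built one tensor factor at a time: the iterated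
Sweedler sum is obtained by repeatedly applying operators of the form
`E ↦ (t ↦ Σ Op (ψ t₍₀₎ x) (E t₍₁₎))`, for `Op` the insertion of a new first factor. Naturality
is proved by induction on `k`, following the first point of `[k]`: a pointed map `f` either sends
it to the basepoint, and then `L(f)` multiplies `a₁` into the module, or to some `j ≥ 1`, and then
`L(f)` multiplies `a₁` into the `j`-th factor. Such a multiplication is pushed past the remaining
Sweedler operators by cocommutativity of `C`, which lets two coproduct factors be swapped, and is
absorbed into a single one by the measuring identities for `ψ` (on `B`) and for `φ` (on `N`);
the factors `1` over empty fibres are absorbed by `ψ s 1 = ε s • 1`.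
-/

namespace Lob

variable {K R P : Type} [Field K] [CommRing R] [Algebra K R] [AddCommGroup P] [Module K P]

theorem hom_ext {k : ℕ} {V : Type} [AddCommGroup V] [Module K V] {f g : Lob K R P k →ₗ[K] V}
    (h : ∀ (p : P) (r : Fin k → R), f (p ⊗ₜ tprod K r) = g (p ⊗ₜ tprod K r)) : f = g :=
  TensorProduct.ext <| LinearMap.ext fun p => PiTensorProduct.ext <| MultilinearMap.ext (h p)

variable (K R P)

noncomputable def ofModule (l : ℕ) : P →ₗ[K] Lob K R P l :=
  (TensorProduct.mk K P _).flip (tprod K fun _ => 1)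

noncomputable def cons (k : ℕ) : R →ₗ[K] Lob K R P k →ₗ[K] Lob K R P (k + 1) :=
  LinearMap.lTensorHom P ∘ₗ tprodCons K R k

noncomputable def mulAt (l : ℕ) (j : Fin l) : R →ₗ[K] Lob K R P l →ₗ[K] Lob K R P l :=
  LinearMap.lTensorHom P ∘ₗ
    (mapMultilinear K (fun _ : Fin l => R) (fun _ => R)).toLinearMap (fun _ => LinearMap.id) j ∘ₗ
      LinearMap.mul K R

variable {K R P}

@[simp] theorem ofModule_apply (l : ℕ) (p : P) :
    ofModule K R P l p = p ⊗ₜ tprod K fun _ => 1 := rfl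

@[simp] theorem cons_tmul (k : ℕ) (r : R) (p : P) (x : Fin k → R) :
    cons K R P k r (p ⊗ₜ tprod K x) = p ⊗ₜ PiTensorProduct.tprod K (Fin.cons r x) := by
  simp [cons, tprodCons, MultilinearMap.curryLeft_apply]

@[simp] theorem mulAt_tmul (l : ℕ) (j : Fin l) (r : R) (p : P) (x : Fin l → R) :
    mulAt K R P l j r (p ⊗ₜ tprod K x) =
      p ⊗ₜ PiTensorProduct.tprod K (Function.update x j (r * x j)) := by
  simp only [mulAt, LinearMap.comp_apply, MultilinearMap.toLinearMap_apply, mapMultilinear_apply,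
    LinearMap.coe_lTensorHom, LinearMap.lTensor_tmul, map_tprod]
  congr 2
  funext i
  rcases eq_or_ne i j with rfl | hij
  · simp
  · simp [Function.update_of_ne hij]

theorem cons_one_comp_ofModule (l : ℕ) :
    cons K R P l 1 ∘ₗ ofModule K R P l = ofModule K R P (l + 1) := by
  ext p
  simp only [LinearMap.comp_apply, ofModule_apply, cons_tmul]
  congr 2
  funext i
  cases i using Fin.cases <;> rfl

theorem mulAt_zero_comp_cons (l : ℕ) (r r' : R) :
    mulAt K R P (l + 1) 0 r ∘ₗ cons K R P l r' = cons K R P l (r * r') :=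
  hom_ext fun p x => by simp [Fin.update_cons_zero]

theorem mulAt_succ_comp_cons (l : ℕ) (j : Fin l) (r r' : R) :
    mulAt K R P (l + 1) j.succ r ∘ₗ cons K R P l r' = cons K R P l r' ∘ₗ mulAt K R P l j r :=
  hom_ext fun p x => by simp [← Fin.cons_update]

variable [Module R P] [IsScalarTower K R P] [SMulCommClass K R P]

variable (K R P)

noncomputable def smulModule (l : ℕ) : R →ₗ[K] Lob K R P l →ₗ[K] Lob K R P l :=
  LinearMap.rTensorHom _ ∘ₗ lsmulKB K R P

noncomputable def slotMul (l : ℕ) : Fin (l + 1) → R →ₗ[K] Lob K R P l →ₗ[K] Lob K R P l :=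
  Fin.cases (smulModule K R P l) (mulAt K R P l)

variable {K R P}

@[simp] theorem smulModule_tmul (l : ℕ) (r : R) (p : P) (y : ⨂[K] (_ : Fin l), R) :
    smulModule K R P l r (p ⊗ₜ y) = (r • p) ⊗ₜ y := rfl

@[simp] theorem slotMul_zero (l : ℕ) : slotMul K R P l 0 = smulModule K R P l := rfl

@[simp] theorem slotMul_succ (l : ℕ) (j : Fin l) : slotMul K R P l j.succ = mulAt K R P l j := rfl

theorem ofModule_comp_lsmulKB (l : ℕ) (r : R) :
    ofModule K R P l ∘ₗ lsmulKB K R P r = smulModule K R P l r ∘ₗ ofModule K R P l :=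
  rfl

theorem smulModule_comp_cons (l : ℕ) (r r' : R) :
    smulModule K R P (l + 1) r ∘ₗ cons K R P l r' = cons K R P l r' ∘ₗ smulModule K R P l r :=
  hom_ext fun p x => by simp

end Lob

def GammaHom.tail {k l : ℕ} (f : GammaHom (k + 1) l) : GammaHom k l :=
  ⟨Fin.cases 0 fun i => f.toFun i.succ.succ, rfl⟩

section Loday

variable {β : Type*} [CommMonoid β] {k l : ℕ}

theorem prod_fiber0_cons (f : GammaHom (k + 1) l) (b : β) (x : Fin k → β) :
    ∏ i ∈ fiber0 f, (Fin.cons b x : Fin (k + 1) → β) i =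
      (if f.toFun 1 = 0 then b else 1) * ∏ i ∈ fiber0 f.tail, x i := by
  simp only [fiber0, Finset.prod_filter, Fin.prod_univ_succ, Fin.cons_zero, Fin.cons_succ,
    Fin.succ_zero_eq_one]
  rfl

theorem prod_fiber_cons (f : GammaHom (k + 1) l) (j : Fin l) (b : β) (x : Fin k → β) :
    ∏ i ∈ fiber f j, (Fin.cons b x : Fin (k + 1) → β) i =
      (if f.toFun 1 = j.succ then b else 1) * ∏ i ∈ fiber f.tail j, x i := by
  simp only [fiber, Finset.prod_filter, Fin.prod_univ_succ, Fin.cons_zero, Fin.cons_succ,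
    Fin.succ_zero_eq_one]
  rfl

variable {K R P : Type} [Field K] [CommRing R] [Algebra K R] [AddCommGroup P] [Module K P]
  [Module R P]

theorem lodayElt_zero (f : GammaHom 0 l) (p : P) (x : Fin 0 → R) :
    lodayElt K R P f p x = Lob.ofModule K R P l p := by
  simp [lodayElt, fiber0, fiber]

def IsLodayFamily (G : ∀ k l : ℕ, GammaHom k l → (Lob K R P k →ₗ[K] Lob K R P l)) : Prop :=
  ∀ (k l : ℕ) (f : GammaHom k l) (p : P) (x : Fin k → R),
    G k l f (p ⊗ₜ[K] tprod K x) = lodayElt K R P f p x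

variable {G : ∀ k l : ℕ, GammaHom k l → (Lob K R P k →ₗ[K] Lob K R P l)}

theorem IsLodayFamily.comp_ofModule (hG : IsLodayFamily G) (f : GammaHom 0 l) :
    G 0 l f ∘ₗ Lob.ofModule K R P 0 = Lob.ofModule K R P l :=
  LinearMap.ext fun p => by simp [hG _ _ f p, lodayElt_zero]

variable [IsScalarTower K R P] [SMulCommClass K R P]

theorem lodayElt_cons (f : GammaHom (k + 1) l) (p : P) (r : R) (x : Fin k → R) :
    lodayElt K R P f p (Fin.cons r x) =
      Lob.slotMul K R P l (f.toFun 1) r (lodayElt K R P f.tail p x) := by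
  rcases Fin.eq_zero_or_eq_succ (f.toFun 1) with h | ⟨j, h⟩
  · simp [lodayElt, prod_fiber0_cons, prod_fiber_cons, h, mul_smul, (Fin.succ_ne_zero _).symm]
  · simp only [lodayElt, prod_fiber0_cons, prod_fiber_cons, h, Lob.slotMul_succ, Lob.mulAt_tmul,
      if_neg (Fin.succ_ne_zero j), one_mul, Fin.succ_inj]
    congr 2
    funext j'
    rcases eq_or_ne j' j with rfl | hj
    · simp
    · simp [hj, Ne.symm hj]

theorem IsLodayFamily.comp_cons (hG : IsLodayFamily G) (f : GammaHom (k + 1) l) (r : R) :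
    G (k + 1) l f ∘ₗ Lob.cons K R P k r = Lob.slotMul K R P l (f.toFun 1) r ∘ₗ G k l f.tail :=
  Lob.hom_ext fun p x => by simp [hG _ _ _ p, lodayElt_cons]

end Loday

theorem TensorProduct.lift_compl₂_comp {R M N P Q Q' : Type*} [CommSemiring R] [AddCommMonoid M]
    [AddCommMonoid N] [AddCommMonoid P] [AddCommMonoid Q] [AddCommMonoid Q'] [Module R M]
    [Module R N] [Module R P] [Module R Q] [Module R Q'] (f : M →ₗ[R] N →ₗ[R] P)
    (g : Q →ₗ[R] N) (h : Q' →ₗ[R] Q) :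
    lift (f.compl₂ (g ∘ₗ h)) = lift (f.compl₂ g) ∘ₗ h.lTensor M :=
  TensorProduct.ext' fun _ _ => rfl

theorem TensorProduct.lift_comp_compl₂ {R M N P Q Q' : Type*} [CommSemiring R] [AddCommMonoid M]
    [AddCommMonoid N] [AddCommMonoid P] [AddCommMonoid Q] [AddCommMonoid Q'] [Module R M]
    [Module R N] [Module R P] [Module R Q] [Module R Q'] (f : M →ₗ[R] N →ₗ[R] P)
    (g : Q' →ₗ[R] M) (h : Q →ₗ[R] N) :
    lift ((f ∘ₗ g).compl₂ h) = lift (f.compl₂ h) ∘ₗ g.rTensor Q :=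
  TensorProduct.ext' fun _ _ => rfl

section Sweedler

variable {K A B C D : Type} [Field K] [Ring A] [Algebra K A] [Ring B] [Algebra K B]
  [AddCommGroup C] [Module K C] [Coalgebra K C] [AddCommGroup D] [Module K D]
  {U V V' W : Type} [AddCommGroup U] [Module K U] [AddCommGroup V] [Module K V]
  [AddCommGroup V'] [Module K V'] [AddCommGroup W] [Module K W]

theorem IsMeasuring.flip_mul {ψ : C →ₗ[K] A →ₗ[K] B} (hψ : IsMeasuring K A B C ψ) (x x' : A) :
    ψ.flip (x * x') =
      lift ((LinearMap.mul K B).compl₁₂ (ψ.flip x) (ψ.flip x')) ∘ₗ Coalgebra.comul :=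
  LinearMap.ext fun s => hψ.measures_mul s x x'

theorem IsMeasuring.flip_one {ψ : C →ₗ[K] A →ₗ[K] B} (hψ : IsMeasuring K A B C ψ) :
    ψ.flip 1 = LinearMap.toSpanSingleton K B 1 ∘ₗ Coalgebra.counit :=
  LinearMap.ext fun s => hψ.measures_one s

theorem CoactionStruct.leftComm_comp_coaction_coaction (hcocomm : IsCocommutative K C)
    (ρ : CoactionStruct K C D) :
    (TensorProduct.leftComm K C C D).toLinearMap ∘ₗ ρ.δ.lTensor C ∘ₗ ρ.δ =
      ρ.δ.lTensor C ∘ₗ ρ.δ := by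
  have hassoc : (TensorProduct.leftComm K C C D).toLinearMap ∘ₗ
      (TensorProduct.assoc K C C D).toLinearMap =
        (TensorProduct.assoc K C C D).toLinearMap ∘ₗ
          (TensorProduct.comm K C C).toLinearMap.rTensor D :=
    TensorProduct.ext_threefold fun _ _ _ => rfl
  rw [← ρ.coassoc, ← LinearMap.comp_assoc, hassoc, LinearMap.comp_assoc,
    ← LinearMap.comp_assoc (h := LinearMap.rTensor D _), ← LinearMap.rTensor_comp, hcocomm]

variable (ψ : C →ₗ[K] A →ₗ[K] B) (ρ : CoactionStruct K C D)

/-- `x ↦ E ↦ (t ↦ Σ Op (ψ t₍₀₎ x) (E t₍₁₎))`. -/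
noncomputable def sweedlerLift (Op : B →ₗ[K] U →ₗ[K] W) :
    A →ₗ[K] (D →ₗ[K] U) →ₗ[K] D →ₗ[K] W :=
  LinearMap.mk₂ K (fun x E => lift ((Op ∘ₗ ψ.flip x).compl₂ E) ∘ₗ ρ.δ)
    (fun _ _ _ => by rw [← LinearMap.add_comp]; exact congrArg (· ∘ₗ _) (ext' fun _ _ => by simp))
    (fun _ _ _ => by rw [← LinearMap.smul_comp]; exact congrArg (· ∘ₗ _) (ext' fun _ _ => by simp))
    (fun _ _ _ => by rw [← LinearMap.add_comp]; exact congrArg (· ∘ₗ _) (ext' fun _ _ => by simp))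
    (fun _ _ _ => by rw [← LinearMap.smul_comp]; exact congrArg (· ∘ₗ _) (ext' fun _ _ => by simp))

theorem sweedlerLift_apply (Op : B →ₗ[K] U →ₗ[K] W) (x : A) (E : D →ₗ[K] U) :
    sweedlerLift ψ ρ Op x E = lift ((Op ∘ₗ ψ.flip x).compl₂ E) ∘ₗ ρ.δ :=
  rfl

theorem sweedlerLift_sweedlerLift (Op₁ : B →ₗ[K] U →ₗ[K] V) (Op₂ : B →ₗ[K] V →ₗ[K] W)
    (x₁ x₂ : A) (E : D →ₗ[K] U) :
    sweedlerLift ψ ρ Op₂ x₂ (sweedlerLift ψ ρ Op₁ x₁ E) =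
      lift ((Op₂ ∘ₗ ψ.flip x₂).compl₂ (lift ((Op₁ ∘ₗ ψ.flip x₁).compl₂ E))) ∘ₗ
        ρ.δ.lTensor C ∘ₗ ρ.δ := by
  rw [sweedlerLift_apply, sweedlerLift_apply, TensorProduct.lift_compl₂_comp, LinearMap.comp_assoc]

theorem sweedlerLift_comm (hcocomm : IsCocommutative K C)
    (Op₁ : B →ₗ[K] U →ₗ[K] V) (Op₂ : B →ₗ[K] V →ₗ[K] W)
    (Op₁' : B →ₗ[K] V' →ₗ[K] W) (Op₂' : B →ₗ[K] U →ₗ[K] V')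
    (hcomm : ∀ b b', Op₂ b ∘ₗ Op₁ b' = Op₁' b' ∘ₗ Op₂' b) (x₁ x₂ : A) (E : D →ₗ[K] U) :
    sweedlerLift ψ ρ Op₂ x₂ (sweedlerLift ψ ρ Op₁ x₁ E) =
      sweedlerLift ψ ρ Op₁' x₁ (sweedlerLift ψ ρ Op₂' x₂ E) := by
  rw [sweedlerLift_sweedlerLift, sweedlerLift_sweedlerLift]
  nth_rewrite 2 [← ρ.leftComm_comp_coaction_coaction hcocomm]
  rw [← LinearMap.comp_assoc (g := (TensorProduct.leftComm K C C D).toLinearMap)]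
  congr 1
  refine TensorProduct.ext_threefold' fun c₁ c₂ d => ?_
  simpa using LinearMap.congr_fun (hcomm (ψ c₁ x₂) (ψ c₂ x₁)) (E d)

theorem sweedlerLift_merge (hψ : IsMeasuring K A B C ψ)
    (Op₁ : B →ₗ[K] U →ₗ[K] V) (Op₂ : B →ₗ[K] V →ₗ[K] W) (Op : B →ₗ[K] U →ₗ[K] W)
    (hmul : ∀ b b', Op₂ b ∘ₗ Op₁ b' = Op (b * b')) (x₁ x₂ : A) (E : D →ₗ[K] U) :
    sweedlerLift ψ ρ Op₂ x₂ (sweedlerLift ψ ρ Op₁ x₁ E) = sweedlerLift ψ ρ Op (x₂ * x₁) E := by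
  rw [sweedlerLift_sweedlerLift, ← ρ.coassoc, sweedlerLift_apply, hψ.flip_mul,
    ← LinearMap.comp_assoc (f := (Coalgebra.comul : C →ₗ[K] C ⊗[K] C)),
    TensorProduct.lift_comp_compl₂ (Op ∘ₗ _)]
  simp only [← LinearMap.comp_assoc]
  congr 2
  refine TensorProduct.ext_threefold fun c₁ c₂ d => ?_
  simpa using LinearMap.congr_fun (hmul (ψ c₁ x₂) (ψ c₂ x₁)) (E d)

theorem sweedlerLift_one (hψ : IsMeasuring K A B C ψ) (Op : B →ₗ[K] U →ₗ[K] W) (E : D →ₗ[K] U) :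
    sweedlerLift ψ ρ Op 1 E = Op 1 ∘ₗ E := by
  rw [sweedlerLift_apply, hψ.flip_one, ← LinearMap.comp_assoc, TensorProduct.lift_comp_compl₂,
    LinearMap.comp_assoc, ρ.rTensor_counit_comp_coaction]
  ext d
  simp

theorem comp_sweedlerLift (Op : B →ₗ[K] U →ₗ[K] V) (Op' : B →ₗ[K] V' →ₗ[K] W)
    (T : V →ₗ[K] W) (T' : U →ₗ[K] V') (h : ∀ b, T ∘ₗ Op b = Op' b ∘ₗ T') (x : A) (E : D →ₗ[K] U) :
    T ∘ₗ sweedlerLift ψ ρ Op x E = sweedlerLift ψ ρ Op' x (T' ∘ₗ E) := by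
  rw [sweedlerLift_apply, sweedlerLift_apply, ← LinearMap.comp_assoc, ← TensorProduct.lift_compr₂]
  congr 1
  refine TensorProduct.ext' fun c d => ?_
  simpa using LinearMap.congr_fun (h (ψ c x)) (E d)

end Sweedler

section Coaction

variable {K C D : Type} [Field K] [AddCommGroup C] [Module K C] [Coalgebra K C]
  [AddCommGroup D] [Module K D]

theorem assoc_comp_rTensor_comul_comp_lTensor {V W : Type} [AddCommGroup V] [Module K V]
    [AddCommGroup W] [Module K W] (f : V →ₗ[K] W) :
    (TensorProduct.assoc K C C W).toLinearMap ∘ₗ (Coalgebra.comul (R := K)).rTensor W ∘ₗ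
        f.lTensor C =
      (f.lTensor C).lTensor C ∘ₗ (TensorProduct.assoc K C C V).toLinearMap ∘ₗ
        (Coalgebra.comul (R := K)).rTensor V := by
  refine TensorProduct.ext' fun c v => ?_
  simp only [LinearMap.comp_apply, LinearMap.lTensor_tmul, LinearMap.rTensor_tmul]
  induction Coalgebra.comul (R := K) c using TensorProduct.induction_on with
  | zero => simp
  | tmul c₁ c₂ => simp
  | add x y hx hy => simp_all [add_tmul]

theorem coactIter_succ_eq_lTensor (ρ : CoactionStruct K C D) (k : ℕ) :
    coactIter K C D ρ (k + 1) = (coactIter K C D ρ k).lTensor C ∘ₗ ρ.δ := by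
  induction k with
  | zero => exact congrArg (· ∘ₗ ρ.δ) (LinearMap.lTensor_id _ _).symm
  | succ k ih =>
    change (TensorProduct.assoc K C C (TD K C D k)).toLinearMap ∘ₗ
      (Coalgebra.comul (R := K)).rTensor (TD K C D k) ∘ₗ coactIter K C D ρ (k + 1) = _
    rw [ih, ← LinearMap.comp_assoc (f := ρ.δ), ← LinearMap.comp_assoc (f := ρ.δ),
      assoc_comp_rTensor_comul_comp_lTensor, LinearMap.comp_assoc, LinearMap.comp_assoc,
      ρ.coassoc, ← LinearMap.comp_assoc (f := ρ.δ), ← LinearMap.lTensor_comp, ← ih]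
    rfl

end Coaction

section LodayMeasuring

variable {K A B C D M N : Type} [Field K]
  [CommRing A] [Algebra K A] [CommRing B] [Algebra K B]
  [AddCommGroup C] [Module K C] [Coalgebra K C] [AddCommGroup D] [Module K D]
  [AddCommGroup M] [Module K M] [AddCommGroup N] [Module K N]
  (ψ : C →ₗ[K] A →ₗ[K] B) (ρ : CoactionStruct K C D) (φ : D →ₗ[K] M →ₗ[K] N)

/-- `t ↦ Σ φ t₍₀₎ m ⊗ ψ t₍₁₎ a₁ ⊗ ⋯ ⊗ ψ t₍ₖ₎ aₖ`. -/
noncomputable def sweedlerChain (k : ℕ) (m : M) (a : Fin k → A) : D →ₗ[K] Lob K B N k :=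
  measurePair K A B C D M N ψ φ k m a ∘ₗ coactIter K C D ρ k

theorem sweedlerChain_zero (m : M) (a : Fin 0 → A) :
    sweedlerChain ψ ρ φ 0 m a = Lob.ofModule K B N 0 ∘ₗ φ.flip m :=
  rfl

theorem sweedlerChain_cons (k : ℕ) (m : M) (x : A) (a : Fin k → A) :
    sweedlerChain ψ ρ φ (k + 1) m (Fin.cons x a) =
      sweedlerLift ψ ρ (Lob.cons K B N k) x (sweedlerChain ψ ρ φ k m a) := by
  rw [sweedlerChain, coactIter_succ_eq_lTensor, sweedlerLift_apply, sweedlerChain,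
    TensorProduct.lift_compl₂_comp]
  rfl

theorem sweedlerChain_add_left (k : ℕ) (m m' : M) (a : Fin k → A) :
    sweedlerChain ψ ρ φ k (m + m') a = sweedlerChain ψ ρ φ k m a + sweedlerChain ψ ρ φ k m' a := by
  induction k with
  | zero => simp [sweedlerChain_zero, LinearMap.comp_add]
  | succ k ih =>
    rw [← Fin.cons_self_tail a]
    simp only [sweedlerChain_cons, ih, map_add]

theorem sweedlerChain_smul_left (k : ℕ) (r : K) (m : M) (a : Fin k → A) :
    sweedlerChain ψ ρ φ k (r • m) a = r • sweedlerChain ψ ρ φ k m a := by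
  induction k with
  | zero => simp [sweedlerChain_zero, LinearMap.comp_smul]
  | succ k ih =>
    rw [← Fin.cons_self_tail a]
    simp only [sweedlerChain_cons, ih, map_smul]

theorem sweedlerChain_update_add (k : ℕ) (m : M) (a : Fin k → A) (i : Fin k) (x y : A) :
    sweedlerChain ψ ρ φ k m (Function.update a i (x + y)) =
      sweedlerChain ψ ρ φ k m (Function.update a i x) +
        sweedlerChain ψ ρ φ k m (Function.update a i y) := by
  induction k with
  | zero => exact i.elim0
  | succ k ih =>
    rw [← Fin.cons_self_tail a]
    cases i using Fin.cases with
    | zero => simp only [Fin.update_cons_zero, sweedlerChain_cons, map_add, LinearMap.add_apply]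
    | succ i => simp only [← Fin.cons_update, sweedlerChain_cons, ih, map_add]

theorem sweedlerChain_update_smul (k : ℕ) (m : M) (a : Fin k → A) (i : Fin k) (r : K) (x : A) :
    sweedlerChain ψ ρ φ k m (Function.update a i (r • x)) =
      r • sweedlerChain ψ ρ φ k m (Function.update a i x) := by
  induction k with
  | zero => exact i.elim0
  | succ k ih =>
    rw [← Fin.cons_self_tail a]
    cases i using Fin.cases with
    | zero => simp only [Fin.update_cons_zero, sweedlerChain_cons, map_smul, LinearMap.smul_apply]
    | succ i => simp only [← Fin.cons_update, sweedlerChain_cons, ih, map_smul]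

noncomputable def sweedlerChainMultilinear (k : ℕ) :
    M →ₗ[K] MultilinearMap K (fun _ : Fin k => A) (D →ₗ[K] Lob K B N k) where
  toFun m :=
    { toFun := sweedlerChain ψ ρ φ k m
      map_update_add' := fun a i x y => by convert sweedlerChain_update_add ψ ρ φ k m a i x y
      map_update_smul' := fun a i r x => by convert sweedlerChain_update_smul ψ ρ φ k m a i r x }
  map_add' m m' := MultilinearMap.ext fun a => sweedlerChain_add_left ψ ρ φ k m m' a
  map_smul' r m := MultilinearMap.ext fun a => sweedlerChain_smul_left ψ ρ φ k r m a

/-- The components `L^φ(t)[k]`, as a function of `t`. -/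
noncomputable def lodayMeasuring (k : ℕ) : Lob K A M k →ₗ[K] D →ₗ[K] Lob K B N k :=
  lift (PiTensorProduct.lift.toLinearMap ∘ₗ sweedlerChainMultilinear ψ ρ φ k)

@[simp] theorem lodayMeasuring_tmul (k : ℕ) (m : M) (a : Fin k → A) :
    lodayMeasuring ψ ρ φ k (m ⊗ₜ tprod K a) = sweedlerChain ψ ρ φ k m a := by
  simp [lodayMeasuring, sweedlerChainMultilinear]

theorem sweedlerChain_one (hψ : IsMeasuring K A B C ψ) (l : ℕ) (m : M) :
    sweedlerChain ψ ρ φ l m (fun _ => 1) = Lob.ofModule K B N l ∘ₗ φ.flip m := by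
  induction l with
  | zero => rfl
  | succ l ih =>
    rw [← Fin.cons_self_tail fun _ => (1 : A), sweedlerChain_cons, Fin.tail_def, ih,
      sweedlerLift_one ψ ρ hψ, ← LinearMap.comp_assoc, Lob.cons_one_comp_ofModule]

theorem sweedlerLift_mulAt_sweedlerChain (hcocomm : IsCocommutative K C)
    (hψ : IsMeasuring K A B C ψ) (l : ℕ) (j : Fin l) (x : A) (m : M) (a : Fin l → A) :
    sweedlerLift ψ ρ (Lob.mulAt K B N l j) x (sweedlerChain ψ ρ φ l m a) =
      sweedlerChain ψ ρ φ l m (Function.update a j (x * a j)) := by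
  induction l with
  | zero => exact j.elim0
  | succ l ih =>
    rw [← Fin.cons_self_tail a, sweedlerChain_cons]
    cases j using Fin.cases with
    | zero =>
      rw [sweedlerLift_merge ψ ρ hψ _ _ _ (Lob.mulAt_zero_comp_cons l), Fin.update_cons_zero,
        Fin.cons_zero, sweedlerChain_cons]
    | succ j =>
      rw [sweedlerLift_comm ψ ρ hcocomm _ _ _ _ (Lob.mulAt_succ_comp_cons l j), ih, Fin.cons_succ,
        ← Fin.cons_update, sweedlerChain_cons]

end LodayMeasuring

section Naturality

variable {K A B C D M N : Type} [Field K]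
  [CommRing A] [Algebra K A] [CommRing B] [Algebra K B]
  [AddCommGroup C] [Module K C] [Coalgebra K C] [AddCommGroup D] [Module K D]
  [AddCommGroup M] [Module K M] [Module A M]
  [AddCommGroup N] [Module K N] [Module B N] [IsScalarTower K B N] [SMulCommClass K B N]
  {ψ : C →ₗ[K] A →ₗ[K] B} {ρ : CoactionStruct K C D} {φ : D →ₗ[K] M →ₗ[K] N}

theorem IsComodMeasuring.sweedlerLift_lsmulKB (hφ : IsComodMeasuring K A B C D M N ψ ρ φ)
    (x : A) (m : M) : sweedlerLift ψ ρ (lsmulKB K B N) x (φ.flip m) = φ.flip (x • m) :=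
  LinearMap.ext fun t => (hφ.measures t x m).symm

theorem sweedlerLift_smulModule_sweedlerChain (hcocomm : IsCocommutative K C)
    (hφ : IsComodMeasuring K A B C D M N ψ ρ φ) (l : ℕ) (x : A) (m : M) (a : Fin l → A) :
    sweedlerLift ψ ρ (Lob.smulModule K B N l) x (sweedlerChain ψ ρ φ l m a) =
      sweedlerChain ψ ρ φ l (x • m) a := by
  induction l with
  | zero =>
    rw [sweedlerChain_zero, sweedlerChain_zero, ← hφ.sweedlerLift_lsmulKB,
      comp_sweedlerLift ψ ρ _ _ _ _ (Lob.ofModule_comp_lsmulKB 0)]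
  | succ l ih =>
    rw [← Fin.cons_self_tail a, sweedlerChain_cons, sweedlerChain_cons,
      sweedlerLift_comm ψ ρ hcocomm _ _ _ _ (Lob.smulModule_comp_cons l), ih]

variable [IsScalarTower K A M] [SMulCommClass K A M]

theorem sweedlerLift_slotMul_lodayMeasuring (hψ : IsMeasuring K A B C ψ)
    (hcocomm : IsCocommutative K C) (hφ : IsComodMeasuring K A B C D M N ψ ρ φ)
    (l : ℕ) (j : Fin (l + 1)) (x : A) (m : M) (a : Fin l → A) :
    sweedlerLift ψ ρ (Lob.slotMul K B N l j) x (lodayMeasuring ψ ρ φ l (m ⊗ₜ tprod K a)) =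
      lodayMeasuring ψ ρ φ l (Lob.slotMul K A M l j x (m ⊗ₜ tprod K a)) := by
  cases j using Fin.cases with
  | zero => simpa using sweedlerLift_smulModule_sweedlerChain hcocomm hφ l x m a
  | succ j => simpa using sweedlerLift_mulAt_sweedlerChain ψ ρ φ hcocomm hψ l j x m a

theorem IsLodayFamily.comp_lodayMeasuring_tmul (hψ : IsMeasuring K A B C ψ)
    (hcocomm : IsCocommutative K C) (hφ : IsComodMeasuring K A B C D M N ψ ρ φ)
    {G : ∀ k l : ℕ, GammaHom k l → (Lob K B N k →ₗ[K] Lob K B N l)} (hG : IsLodayFamily G)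
    {k l : ℕ} (f : GammaHom k l) (m : M) (a : Fin k → A) :
    G k l f ∘ₗ lodayMeasuring ψ ρ φ k (m ⊗ₜ tprod K a) =
      lodayMeasuring ψ ρ φ l (lodayElt K A M f m a) := by
  induction k with
  | zero =>
    rw [lodayMeasuring_tmul, sweedlerChain_zero, ← LinearMap.comp_assoc, hG.comp_ofModule,
      lodayElt_zero, Lob.ofModule_apply, lodayMeasuring_tmul, sweedlerChain_one ψ ρ φ hψ]
  | succ k ih =>
    rw [← Fin.cons_self_tail a, lodayMeasuring_tmul, sweedlerChain_cons,
      comp_sweedlerLift ψ ρ _ _ _ _ (hG.comp_cons f), ← lodayMeasuring_tmul, ih, lodayElt_cons]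
    exact sweedlerLift_slotMul_lodayMeasuring hψ hcocomm hφ l (f.toFun 1) _ _ _

end Naturality

/-- Lemma 2.2. Let `ψ : C →ₗ[K] Hom_K(A,B)` be a cocommutative
coalgebra measuring between commutative algebras and `φ : D →ₗ[K] Hom_K(M,N)` a
`C`-comodule measuring relative to `ψ`.  Given the Loday `Γ`-modules `L(A,M)` and
`L(B,N)` (families `F`, `G` of linear maps acting by the Loday formula on pure tensors),
for each `t ∈ D` the maps `L^φ(t)[k] : M ⊗ A^{⊗k} → N ⊗ B^{⊗k}`,
`m ⊗ a₁ ⊗ ⋯ ⊗ aₖ ↦ Σ φ t₍₀₎ m ⊗ ψ t₍₁₎ a₁ ⊗ ⋯ ⊗ ψ t₍ₖ₎ aₖ`, are well-defined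
`K`-linear maps and assemble into a natural transformation `L(A,M) ⟶ L(B,N)`. -/
theorem measuring_loday_natural (K A B C D M N : Type) [Field K]
    [CommRing A] [Algebra K A] [CommRing B] [Algebra K B]
    [AddCommGroup C] [Module K C] [Coalgebra K C]
    [AddCommGroup D] [Module K D]
    [AddCommGroup M] [Module K M] [Module A M] [IsScalarTower K A M] [SMulCommClass K A M]
    [AddCommGroup N] [Module K N] [Module B N] [IsScalarTower K B N] [SMulCommClass K B N]
    (ψ : C →ₗ[K] A →ₗ[K] B) (hψ : IsMeasuring K A B C ψ)
    (hcocomm : IsCocommutative K C)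
    (ρ : CoactionStruct K C D) (φ : D →ₗ[K] M →ₗ[K] N)
    (hφ : IsComodMeasuring K A B C D M N ψ ρ φ)
    (F : ∀ k l : ℕ, GammaHom k l → (Lob K A M k →ₗ[K] Lob K A M l))
    (hF : ∀ (k l : ℕ) (f : GammaHom k l) (m : M) (a : Fin k → A),
        F k l f (m ⊗ₜ[K] tprod K a) = lodayElt K A M f m a)
    (G : ∀ k l : ℕ, GammaHom k l → (Lob K B N k →ₗ[K] Lob K B N l))
    (hG : ∀ (k l : ℕ) (f : GammaHom k l) (n : N) (b : Fin k → B),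
        G k l f (n ⊗ₜ[K] tprod K b) = lodayElt K B N f n b)
    (t : D) :
    ∃ η : ∀ k : ℕ, Lob K A M k →ₗ[K] Lob K B N k,
      (∀ (k : ℕ) (m : M) (a : Fin k → A),
          η k (m ⊗ₜ[K] tprod K a) =
            measurePair K A B C D M N ψ φ k m a (coactIter K C D ρ k t)) ∧
      (∀ (k l : ℕ) (f : GammaHom k l), (G k l f) ∘ₗ η k = η l ∘ₗ (F k l f)) := by
  refine ⟨fun k => (lodayMeasuring ψ ρ φ k).flip t, fun k m a => by simp [sweedlerChain],
    fun k l f => Lob.hom_ext fun m a => ?_⟩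
  have hnat := IsLodayFamily.comp_lodayMeasuring_tmul hψ hcocomm hφ hG f m a
  simpa [hF] using LinearMap.congr_fun hnat t
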